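/- Let G be a finite simple graph, k ≥ 3, U_k a k-set of vertices inducing a clique, and for a clique-inducing set S let R_{k,S} denote the number of (k−|S|)-subsets T of the common neighborhood of S such that S ∪ T induces a K_k (with R_{k,U_k} = 1). Then for any m-subset U_m of U_k with 2 ≤ m ≤ k, the number Q^{U_m} of k-cliques K of G with K ∩ U_k = U_m satisfies the inclusion–exclusion formula Q^{U_m} = ∑_{i=0}^{k−m} (−1)^i ∑_{T_i ∈ C(U_k∖U_m, i)} R_{k, U_m ∪ T_i}. -/

import Mathlib

/-!
Extending `S` by a `(k - |S|)`-set of common neighbours to a `K_k` is the same as choosing a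
`k`-clique containing `S`, so `R_{k,S}` counts the `k`-cliques `K ⊇ S`. Swapping the order of
summation, a clique `K` contributes `∑_{T ⊆ (U_k ∖ U_m) ∩ K} (-1)^|T|` if `U_m ⊆ K` and `0`
otherwise; this alternating sum is `1` exactly when `(U_k ∖ U_m) ∩ K = ∅`, i.e. when
`K ∩ U_k = U_m`.
-/

open Finset

namespace SimpleGraph

variable {V : Type*} [Fintype V] [DecidableEq V] (G : SimpleGraph V) [DecidableRel G.Adj]

theorem card_filter_isNClique_union_eq (k : ℕ) (S : Finset V) :
    (((univ.filter fun v => ∀ u ∈ S, G.Adj u v).powersetCard (k - #S)).filter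
        fun T => G.IsNClique k (S ∪ T)).card = #{K ∈ G.cliqueFinset k | S ⊆ K} := by
  refine card_nbij' (S ∪ ·) (· \ S) ?_ ?_ ?_ ?_
  · intro T hT
    simp only [coe_filter, Set.mem_ofPred_eq, mem_cliqueFinset_iff] at hT ⊢
    exact ⟨hT.2, subset_union_left⟩
  · intro K hK
    simp only [coe_filter, Set.mem_ofPred_eq, mem_cliqueFinset_iff, mem_powersetCard] at hK ⊢
    obtain ⟨hK, hSK⟩ := hK
    refine ⟨⟨fun v hv => ?_, by rw [card_sdiff_of_subset hSK, hK.card_eq]⟩,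
      by rwa [union_sdiff_of_subset hSK]⟩
    obtain ⟨hvK, hvS⟩ := mem_sdiff.1 hv
    simp only [mem_filter, mem_univ, true_and]
    exact fun u hu => hK.isClique (hSK hu) hvK (ne_of_mem_of_not_mem hu hvS)
  · intro T hT
    simp only [coe_filter, Set.mem_ofPred_eq, mem_powersetCard] at hT
    -- no vertex is adjacent to itself, so the common neighbours of `S` avoid `S`
    have hST : Disjoint S T := disjoint_right.2 fun v hvT hvS => by
      have := hT.1.1 hvT
      simp only [mem_filter, mem_univ, true_and] at this
      exact G.irrefl (this v hvS)
    exact union_sdiff_cancel_left hST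
  · intro K hK
    simp only [coe_filter, Set.mem_ofPred_eq] at hK
    exact union_sdiff_of_subset hK.2

end SimpleGraph

namespace Finset

variable {α : Type*} [DecidableEq α]

theorem sum_powerset_sdiff_ite_union_subset {A U K : Finset α} (hAU : A ⊆ U) :
    ∑ T ∈ (U \ A).powerset, (if A ∪ T ⊆ K then (-1 : ℤ) ^ #T else 0) =
      if K ∩ U = A then 1 else 0 := by
  rw [← sum_filter]
  by_cases hAK : A ⊆ K
  · have hfilter : {T ∈ (U \ A).powerset | A ∪ T ⊆ K} = ((U \ A) ∩ K).powerset := by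
      ext T
      simp only [mem_filter, mem_powerset, union_subset_iff, subset_inter_iff, hAK, true_and]
    rw [hfilter, sum_powerset_neg_one_pow_card]
    refine if_congr ?_ rfl rfl
    simp only [Finset.ext_iff, mem_inter, mem_sdiff, notMem_empty, iff_false]
    exact ⟨fun h x => ⟨fun hx => not_not.1 fun hxA => h x ⟨⟨hx.2, hxA⟩, hx.1⟩,
      fun hx => ⟨hAK hx, hAU hx⟩⟩, fun h x hx => hx.1.2 ((h x).1 ⟨hx.2, hx.1.1⟩)⟩
  · have hfilter : {T ∈ (U \ A).powerset | A ∪ T ⊆ K} = ∅ :=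
      filter_false_of_mem fun T _ h => hAK (union_subset_iff.1 h).1
    rw [hfilter, sum_empty, if_neg]
    rintro rfl
    exact hAK inter_subset_left

end Finset

theorem clique_inclusion_exclusion_general (n k : ℕ)
    (G : SimpleGraph (Fin n)) [DecidableRel G.Adj]
    (Uk : Finset (Fin n)) (hUk : G.IsNClique k Uk)
    (R : Finset (Fin n) → ℤ)
    (hR : ∀ S : Finset (Fin n),
      R S = ((((Finset.univ.filter (fun v => ∀ u ∈ S, G.Adj u v)).powersetCard (k - S.card)).filter
        (fun T => G.IsNClique k (S ∪ T))).card : ℤ))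
    (m : ℕ)
    (Um : Finset (Fin n)) (hUm : Um ⊆ Uk) (hUmcard : Um.card = m) :
    (((G.cliqueFinset k).filter (fun K => K ∩ Uk = Um)).card : ℤ) =
      ∑ i ∈ Finset.range (k - m + 1), (-1 : ℤ) ^ i *
        ∑ Ti ∈ (Uk \ Um).powersetCard i, R (Um ∪ Ti) := by
  have hR_supersets (S : Finset (Fin n)) : R S = #{K ∈ G.cliqueFinset k | S ⊆ K} := by
    rw [hR, ← G.card_filter_isNClique_union_eq]
    -- `Fin n` has its own decidability instance for `∀ u ∈ S, _`
    congr!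
  have hcard : #(Uk \ Um) = k - m := by
    rw [card_sdiff_of_subset hUm, hUk.card_eq, hUmcard]
  calc (((G.cliqueFinset k).filter (fun K => K ∩ Uk = Um)).card : ℤ)
      = ∑ K ∈ G.cliqueFinset k, if K ∩ Uk = Um then 1 else 0 := by rw [sum_boole]
    _ = ∑ K ∈ G.cliqueFinset k, ∑ T ∈ (Uk \ Um).powerset,
          if Um ∪ T ⊆ K then (-1 : ℤ) ^ #T else 0 := by
        simp only [sum_powerset_sdiff_ite_union_subset hUm]
    _ = ∑ T ∈ (Uk \ Um).powerset, (-1 : ℤ) ^ #T * R (Um ∪ T) := by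
        rw [sum_comm]
        refine sum_congr rfl fun T _ => ?_
        rw [← sum_filter, sum_const, nsmul_eq_mul, mul_comm, hR_supersets]
    _ = _ := by
        rw [sum_powerset, hcard]
        refine sum_congr rfl fun i _ => ?_
        rw [mul_sum]
        exact sum_congr rfl fun T hT => by rw [(mem_powersetCard.1 hT).2]

theorem clique_inclusion_exclusion (n k : ℕ) (hk : 3 ≤ k)
    (G : SimpleGraph (Fin n)) [DecidableRel G.Adj]
    (Uk : Finset (Fin n)) (hUk : G.IsNClique k Uk)
    (R : Finset (Fin n) → ℤ)
    (hR : ∀ S : Finset (Fin n),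
      R S = ((((Finset.univ.filter (fun v => ∀ u ∈ S, G.Adj u v)).powersetCard (k - S.card)).filter
        (fun T => G.IsNClique k (S ∪ T))).card : ℤ))
    (m : ℕ) (hm2 : 2 ≤ m) (hmk : m ≤ k)
    (Um : Finset (Fin n)) (hUm : Um ⊆ Uk) (hUmcard : Um.card = m) :
    (((G.cliqueFinset k).filter (fun K => K ∩ Uk = Um)).card : ℤ) =
      ∑ i ∈ Finset.range (k - m + 1), (-1 : ℤ) ^ i *
        ∑ Ti ∈ (Uk \ Um).powersetCard i, R (Um ∪ Ti) :=
  clique_inclusion_exclusion_general n k G Uk hUk R hR m Um hUm hUmcard
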